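/- arXiv:2007.04818 — 5 statements merged into one kernel-verified Lean document; each statement's English description precedes it below -/
import Mathlib

section
/- For every discrete policy Q = (Q_L, Q_R), if U ∈ ℝ^I satisfies −ε(Δ♯U)_i + Q_{L,i}⁺ (D_L U)_i + Q_{R,i}⁻ (D_R U)_i = 0 for every index i, then U is a constant vector. Equivalently, the kernel of A(Q)ᵀ consists exactly of the constant vectors { c·(1,…,1) : c ∈ ℝ }. -/
open Matrix Filter Topology

noncomputable section

/-- Grid step `h = 1/I`. -/
def hh (I : ℕ) : ℝ := (I : ℝ)⁻¹

/-- Discrete periodic Laplacian `(Δ♯U)_i = (U_{i-1} - 2U_i + U_{i+1})/h²`. -/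
def lapD (I : ℕ) (U : ZMod I → ℝ) (i : ZMod I) : ℝ :=
  (U (i - 1) - 2 * U i + U (i + 1)) / hh I ^ 2

/-- Left discrete derivative `(D_L U)_i = (U_i - U_{i-1})/h`. -/
def DLd (I : ℕ) (U : ZMod I → ℝ) (i : ZMod I) : ℝ := (U i - U (i - 1)) / hh I

/-- Right discrete derivative `(D_R U)_i = (U_{i+1} - U_i)/h`. -/
def DRd (I : ℕ) (U : ZMod I → ℝ) (i : ZMod I) : ℝ := (U (i + 1) - U i) / hh I

/-- Positive part `a⁺ = max(a,0)`. -/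
def pp (a : ℝ) : ℝ := max a 0

/-- Negative part `a⁻ = min(a,0)`. -/
def np (a : ℝ) : ℝ := min a 0

/-- The discrete Fokker–Planck matrix `A(Q)` associated to a discrete policy
`Q = (Q_L, Q_R)`: `A(Q)_{i,i} = 2ε/h² + Q_{L,i}⁺/h − Q_{R,i}⁻/h`,
`A(Q)_{i,i−1} = −ε/h² + Q_{R,i−1}⁻/h`, `A(Q)_{i,i+1} = −ε/h² − Q_{L,i+1}⁺/h`,
all other entries zero (indices mod `I`). -/
def FPmat (I : ℕ) (ε : ℝ) (QL QR : ZMod I → ℝ) : Matrix (ZMod I) (ZMod I) ℝ :=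
  fun i j =>
    (if j = i then 2 * ε / hh I ^ 2 + pp (QL i) / hh I - np (QR i) / hh I else 0)
    + (if j = i - 1 then -ε / hh I ^ 2 + np (QR (i - 1)) / hh I else 0)
    + (if j = i + 1 then -ε / hh I ^ 2 - pp (QL (i + 1)) / hh I else 0)

end

lemma FPmat_transpose_mulVec (I : ℕ) [NeZero I] (ε : ℝ) (QL QR : ZMod I → ℝ)
    (U : ZMod I → ℝ) (i : ZMod I) :
    (FPmat I ε QL QR)ᵀ.mulVec U i
      = (2 * ε / hh I ^ 2 + pp (QL i) / hh I - np (QR i) / hh I) * U i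
        + (-ε / hh I ^ 2 + np (QR i) / hh I) * U (i + 1)
        + (-ε / hh I ^ 2 - pp (QL i) / hh I) * U (i - 1) := by
  simp only [Matrix.mulVec, Matrix.transpose_apply, FPmat, dotProduct, add_mul, ite_mul,
    zero_mul, Finset.sum_add_distrib]
  simp_rw [eq_sub_iff_add_eq, ← sub_eq_iff_eq_add]
  rw [Finset.sum_ite_eq Finset.univ i, Finset.sum_ite_eq Finset.univ (i + 1),
    Finset.sum_ite_eq Finset.univ (i - 1)]
  simp

lemma max_principle (I : ℕ) [NeZero I] (hI : 3 ≤ I) (ε : ℝ) (hε : 0 < ε)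
    (QL QR : ZMod I → ℝ) (U : ZMod I → ℝ)
    (hU : ∀ i, -ε * lapD I U i + pp (QL i) * DLd I U i + np (QR i) * DRd I U i = 0) :
    ∃ c : ℝ, ∀ i, U i = c := by
  have hIpos : (0 : ℝ) < I := by exact_mod_cast Nat.pos_of_ne_zero (NeZero.ne I)
  have hh0 : 0 < hh I := by simp [hh]; positivity
  obtain ⟨i0, hmax⟩ := Finite.exists_max U
  refine ⟨U i0, ?_⟩
  -- step lemma : at any point attaining the max, the right neighbor also attains it
  have step : ∀ i : ZMod I, U i = U i0 → U (i + 1) = U i0 := by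
    intro i hi
    have hpp : 0 ≤ pp (QL i) := le_max_right _ _
    have hnp : np (QR i) ≤ 0 := min_le_right _ _
    have c1 : 0 < ε / hh I ^ 2 + pp (QL i) / hh I := by positivity
    have c2 : 0 < ε / hh I ^ 2 - np (QR i) / hh I := by
      have h1 : 0 < ε / hh I ^ 2 := by positivity
      have h2 : np (QR i) / hh I ≤ 0 := div_nonpos_of_nonpos_of_nonneg hnp hh0.le
      linarith
    have key : (ε / hh I ^ 2 + pp (QL i) / hh I) * (U i - U (i - 1))
        + (ε / hh I ^ 2 - np (QR i) / hh I) * (U i - U (i + 1)) = 0 := by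
      have h := hU i
      simp only [lapD, DLd, DRd] at h
      field_simp at h ⊢
      nlinarith [h]
    have ha : 0 ≤ U i - U (i - 1) := by have := hmax (i - 1); rw [hi] at *; linarith [hmax (i-1), hi ▸ hmax (i-1)]
    have hb : 0 ≤ U i - U (i + 1) := by
      have := hmax (i + 1); rw [hi]; linarith
    have : U i - U (i + 1) = 0 := by nlinarith
    linarith [hi]
  have main : ∀ n : ℕ, U (i0 + (n : ZMod I)) = U i0 := by
    intro n
    induction n with
    | zero => simp
    | succ m ih =>
      have := step (i0 + (m : ZMod I)) ih
      push_cast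
      rw [← add_assoc]
      exact this
  intro j
  have : j = i0 + (((j - i0).val : ℕ) : ZMod I) := by
    simp [ZMod.natCast_val, ZMod.cast_id]
  rw [this, main]

/-- if `−ε(Δ♯U)_i + Q_{L,i}⁺(D_L U)_i + Q_{R,i}⁻(D_R U)_i = 0` for all `i`
then `U` is constant; equivalently the kernel of `A(Q)ᵀ` consists exactly of the
constant vectors. -/
theorem statement_7 (I : ℕ) [NeZero I] (hI : 3 ≤ I) (ε : ℝ) (hε : 0 < ε)
    (QL QR : ZMod I → ℝ) :
    (∀ U : ZMod I → ℝ,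
      (∀ i, -ε * lapD I U i + pp (QL i) * DLd I U i + np (QR i) * DRd I U i = 0) →
      ∃ c : ℝ, ∀ i, U i = c) ∧
    (∀ U : ZMod I → ℝ,
      (FPmat I ε QL QR)ᵀ.mulVec U = 0 ↔ ∃ c : ℝ, U = fun _ => c) := by
  have hIpos : (0 : ℝ) < I := by exact_mod_cast Nat.pos_of_ne_zero (NeZero.ne I)
  have hh0 : 0 < hh I := by simp [hh]; positivity
  -- mulVec value equals the PDE expression
  have hveq : ∀ (U : ZMod I → ℝ) (i : ZMod I),
      (FPmat I ε QL QR)ᵀ.mulVec U i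
        = -ε * lapD I U i + pp (QL i) * DLd I U i + np (QR i) * DRd I U i := by
    intro U i
    rw [FPmat_transpose_mulVec]
    simp only [lapD, DLd, DRd]
    field_simp
    ring
  constructor
  · exact fun U hU => max_principle I hI ε hε QL QR U hU
  · intro U
    constructor
    · intro h
      have hU : ∀ i, -ε * lapD I U i + pp (QL i) * DLd I U i + np (QR i) * DRd I U i = 0 := by
        intro i
        rw [← hveq U i, h]
        rfl
      obtain ⟨c, hc⟩ := max_principle I hI ε hε QL QR U hU
      exact ⟨c, funext hc⟩
    · rintro ⟨c, rfl⟩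
      funext i
      rw [hveq]
      simp only [lapD, DLd, DRd, Pi.zero_apply]
      ring_nf
end

section
/- For every discrete policy Q = (Q_L, Q_R), the kernel of the discrete Fokker–Planck matrix A(Q) is one-dimensional. -/
open Matrix Filter Topology

/-- Formula for the transposed Fokker–Planck matrix acting on a vector. -/
lemma FP_mulVecT (I : ℕ) [NeZero I] (ε : ℝ) (QL QR : ZMod I → ℝ)
    (V : ZMod I → ℝ) (j : ZMod I) :
    ((FPmat I ε QL QR)ᵀ.mulVec V) j =
      (ε/hh I ^ 2 - np (QR j)/hh I) * (V j - V (j+1))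
      + (ε/hh I ^ 2 + pp (QL j)/hh I) * (V j - V (j-1)) := by
  have : ((FPmat I ε QL QR)ᵀ.mulVec V) j =
      (2*ε/hh I ^ 2 + pp (QL j)/hh I - np (QR j)/hh I) * V j
      + (-ε/hh I ^ 2 + np (QR j)/hh I) * V (j+1)
      + (-ε/hh I ^ 2 - pp (QL j)/hh I) * V (j-1) := by
    simp only [Matrix.mulVec, dotProduct, Matrix.transpose_apply, FPmat, add_mul,
      ite_mul, zero_mul, Finset.sum_add_distrib, eq_sub_iff_add_eq, ← sub_eq_iff_eq_add,
      Finset.sum_ite_eq, Finset.mem_univ, if_true, add_sub_cancel_right, sub_add_cancel]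
  rw [this]; ring

/-- Maximum principle: kernel vectors of the transpose are constant. -/
lemma FP_kerT_const (I : ℕ) [NeZero I] (ε : ℝ) (hε : 0 < ε) (QL QR : ZMod I → ℝ)
    (V : ZMod I → ℝ) (hV : (FPmat I ε QL QR)ᵀ.mulVec V = 0) : ∀ i, V i = V 0 := by
  have hI0 : 0 < (I : ℝ) := by exact_mod_cast (NeZero.pos I)
  have hh0 : 0 < hh I := by unfold hh; exact inv_pos.mpr hI0
  obtain ⟨j0, hj0⟩ : ∃ j0, ∀ i, V i ≤ V j0 := Finite.exists_max V
  have step : ∀ j : ZMod I, V j = V j0 → V (j + 1) = V j0 := by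
    intro j hj
    have h1 : ((FPmat I ε QL QR)ᵀ.mulVec V) j = 0 := by rw [hV]; rfl
    rw [FP_mulVecT] at h1
    have hcoef : 0 < ε / hh I ^ 2 := div_pos hε (pow_pos hh0 2)
    have ha : 0 < ε/hh I ^ 2 - np (QR j)/hh I := by
      have h : np (QR j) ≤ 0 := min_le_right _ _
      have := div_nonpos_of_nonpos_of_nonneg h hh0.le
      linarith
    have hb : 0 < ε/hh I ^ 2 + pp (QL j)/hh I := by
      have h : 0 ≤ pp (QL j) := le_max_right _ _
      have := div_nonneg h hh0.le
      linarith
    have h2 : 0 ≤ V j - V (j + 1) := by rw [hj]; linarith [hj0 (j+1)]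
    have h3 : 0 ≤ V j - V (j - 1) := by rw [hj]; linarith [hj0 (j-1)]
    have hx : (ε/hh I ^ 2 - np (QR j)/hh I) * (V j - V (j + 1)) = 0 := by
      nlinarith [mul_nonneg ha.le h2, mul_nonneg hb.le h3]
    have hx2 := (mul_eq_zero.mp hx).resolve_left ha.ne'
    linarith
  have all : ∀ n : ℕ, V (j0 + n) = V j0 := by
    intro n
    induction n with
    | zero => simp
    | succ n ih =>
        have h := step (j0 + n) ih
        have hc : (j0 : ZMod I) + ((n+1 : ℕ) : ZMod I) = j0 + (n : ZMod I) + 1 := by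
          push_cast; ring
        rw [hc]; exact h
  have hconst : ∀ i, V i = V j0 := by
    intro i
    have h : i = j0 + ((i - j0).val : ZMod I) := by
      rw [ZMod.natCast_val, ZMod.cast_id]; ring
    rw [h]; exact all _
  intro i; rw [hconst i, hconst 0]

lemma FP_kerT_eq_span (I : ℕ) [NeZero I] (ε : ℝ) (hε : 0 < ε) (QL QR : ZMod I → ℝ) :
    LinearMap.ker (FPmat I ε QL QR)ᵀ.mulVecLin
      = Submodule.span ℝ {fun _ : ZMod I => (1:ℝ)} := by
  apply le_antisymm
  · intro V hV
    rw [LinearMap.mem_ker, Matrix.mulVecLin_apply] at hV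
    have hc := FP_kerT_const I ε hε QL QR V hV
    have hVeq : V = V 0 • (fun _ : ZMod I => (1:ℝ)) := by
      funext i; simp [hc i]
    rw [hVeq]
    exact Submodule.smul_mem _ _ (Submodule.mem_span_singleton_self _)
  · rw [Submodule.span_le, Set.singleton_subset_iff]
    simp only [SetLike.mem_coe, LinearMap.mem_ker]
    funext j
    rw [Matrix.mulVecLin_apply, FP_mulVecT]
    simp

/-- for every discrete policy `Q = (Q_L, Q_R)`, the kernel of the discrete
Fokker–Planck matrix `A(Q)` is one-dimensional. -/
theorem statement_8 (I : ℕ) [NeZero I] (hI : 3 ≤ I) (ε : ℝ) (hε : 0 < ε)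
    (QL QR : ZMod I → ℝ) :
    Module.finrank ℝ (LinearMap.ker (FPmat I ε QL QR).mulVecLin) = 1 := by
  set A := FPmat I ε QL QR with hA
  have hkT : Module.finrank ℝ (LinearMap.ker Aᵀ.mulVecLin) = 1 := by
    rw [FP_kerT_eq_span I ε hε QL QR]
    apply finrank_span_singleton
    intro h
    have := congrFun h 0
    norm_num at this
  have e1 := LinearMap.finrank_range_add_finrank_ker A.mulVecLin
  have e2 := LinearMap.finrank_range_add_finrank_ker Aᵀ.mulVecLin
  have hr : Aᵀ.rank = A.rank := Matrix.rank_transpose A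
  have hr1 : A.rank = Module.finrank ℝ (LinearMap.range A.mulVecLin) := rfl
  have hr2 : Aᵀ.rank = Module.finrank ℝ (LinearMap.range Aᵀ.mulVecLin) := rfl
  omega
end

section
/- For every discrete policy Q = (Q_L, Q_R) and every μ > 0, the matrix μI + A(Q) is invertible and every entry of its inverse (μI + A(Q))^{-1} is nonnegative (i.e. μI + A(Q) is a nonsingular M-matrix). -/
open Matrix Filter Topology

lemma key_nonneg {n : Type*} [Fintype n] [DecidableEq n] [Nonempty n]
    (N : Matrix n n ℝ) (hoff : ∀ i j, i ≠ j → N i j ≤ 0)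
    (hrow : ∀ i, 0 < ∑ j, N i j)
    (x : n → ℝ) (hx : ∀ k, 0 ≤ N.mulVec x k) : ∀ i, 0 ≤ x i := by
  by_contra h
  push_neg at h
  obtain ⟨i0, hi0⟩ := h
  obtain ⟨k, -, hk⟩ := Finset.exists_min_image Finset.univ x ⟨i0, Finset.mem_univ i0⟩
  have hxk : x k < 0 := lt_of_le_of_lt (hk i0 (Finset.mem_univ i0)) hi0
  have h1 : N.mulVec x k ≤ (∑ j, N k j) * x k := by
    rw [Finset.sum_mul]
    simp only [Matrix.mulVec, dotProduct]
    apply Finset.sum_le_sum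
    intro j _
    rcases eq_or_ne j k with rfl | hj
    · exact le_rfl
    · have := hoff k j (Ne.symm hj)
      nlinarith [hk j (Finset.mem_univ j)]
  have h2 : (∑ j, N k j) * x k < 0 := mul_neg_of_pos_of_neg (hrow k) hxk
  exact absurd (lt_of_le_of_lt h1 h2) (not_lt.mpr (hx k))

lemma Mmat {n : Type*} [Fintype n] [DecidableEq n] [Nonempty n]
    (N : Matrix n n ℝ) (hoff : ∀ i j, i ≠ j → N i j ≤ 0)
    (hrow : ∀ i, 0 < ∑ j, N i j) :
    IsUnit N ∧ ∀ i j, 0 ≤ N⁻¹ i j := by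
  have hdet : N.det ≠ 0 := by
    intro hd
    obtain ⟨v, hv, hNv⟩ := (Matrix.exists_mulVec_eq_zero_iff).mpr hd
    have h1 : ∀ i, 0 ≤ v i := key_nonneg N hoff hrow v (by simp [hNv])
    have h2 : ∀ i, 0 ≤ (-v) i := key_nonneg N hoff hrow (-v) (by simp [Matrix.mulVec_neg, hNv])
    exact hv (funext fun i => le_antisymm (by simpa using h2 i) (h1 i))
  have hu : IsUnit N := (Matrix.isUnit_iff_isUnit_det N).mpr (isUnit_iff_ne_zero.mpr hdet)
  refine ⟨hu, fun i j => ?_⟩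
  have hx : ∀ k, 0 ≤ N.mulVec (fun i => N⁻¹ i j) k := by
    intro k
    have : N.mulVec (fun i => N⁻¹ i j) k = (N * N⁻¹) k j := rfl
    rw [this, Matrix.mul_nonsing_inv N (isUnit_iff_ne_zero.mpr hdet)]
    simp [Matrix.one_apply]
    positivity
  exact key_nonneg N hoff hrow _ hx i

/-- for every discrete policy `Q` and every `μ > 0`, the matrix `μI + A(Q)`
is invertible and all entries of its inverse are nonnegative. -/
theorem statement_9 (I : ℕ) [NeZero I] (hI : 3 ≤ I) (ε : ℝ) (hε : 0 < ε)
    (QL QR : ZMod I → ℝ) (μ : ℝ) (hμ : 0 < μ) :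
    IsUnit (μ • (1 : Matrix (ZMod I) (ZMod I) ℝ) + FPmat I ε QL QR) ∧
    ∀ i j : ZMod I, 0 ≤ (μ • (1 : Matrix (ZMod I) (ZMod I) ℝ) + FPmat I ε QL QR)⁻¹ i j := by
  set M : Matrix (ZMod I) (ZMod I) ℝ := μ • (1 : Matrix (ZMod I) (ZMod I) ℝ) + FPmat I ε QL QR
    with hM
  have hIpos : (0:ℝ) < I := by
    have : 0 < I := lt_of_lt_of_le (by norm_num) hI
    exact_mod_cast this
  have hhpos : 0 < hh I := by rw [hh]; exact inv_pos.mpr hIpos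
  have hoff : ∀ i j : ZMod I, i ≠ j → M.transpose i j ≤ 0 := by
    intro i j hij
    have f1 : -ε / hh I ^ 2 < 0 :=
      div_neg_of_neg_of_pos (by linarith) (by positivity)
    have f2 : np (QR (j - 1)) / hh I ≤ 0 :=
      div_nonpos_of_nonpos_of_nonneg (min_le_right _ _) hhpos.le
    have f3 : 0 ≤ pp (QL (j + 1)) / hh I := div_nonneg (le_max_right _ _) hhpos.le
    simp only [hM, Matrix.transpose_apply, Matrix.add_apply, Matrix.smul_apply,
      Matrix.one_apply, FPmat, if_neg hij, if_neg (Ne.symm hij), smul_zero, zero_add]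
    split_ifs <;> linarith
  have hFPsum : ∀ i : ZMod I, (∑ j, FPmat I ε QL QR j i) = 0 := by
    intro i
    have hsplit : (∑ j, FPmat I ε QL QR j i) =
        (∑ j, if i = j then 2 * ε / hh I ^ 2 + pp (QL j) / hh I - np (QR j) / hh I else 0)
      + (∑ j, if i = j - 1 then -ε / hh I ^ 2 + np (QR (j - 1)) / hh I else 0)
      + (∑ j, if i = j + 1 then -ε / hh I ^ 2 - pp (QL (j + 1)) / hh I else 0) := by
      rw [← Finset.sum_add_distrib, ← Finset.sum_add_distrib]
      exact Finset.sum_congr rfl fun x _ => rfl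
    have e1 : (∑ j, if i = j then 2 * ε / hh I ^ 2 + pp (QL j) / hh I - np (QR j) / hh I else 0)
        = 2 * ε / hh I ^ 2 + pp (QL i) / hh I - np (QR i) / hh I := by
      simp [Finset.sum_ite_eq]
    have e2 : (∑ j, if i = j - 1 then -ε / hh I ^ 2 + np (QR (j - 1)) / hh I else 0)
        = -ε / hh I ^ 2 + np (QR i) / hh I := by
      rw [Finset.sum_eq_single (i + 1)]
      · rw [if_pos (add_sub_cancel_right i 1).symm, add_sub_cancel_right]
      · intro b _ hb
        rw [if_neg]
        intro h
        exact hb (by rw [h, sub_add_cancel])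
      · simp
    have e3 : (∑ j, if i = j + 1 then -ε / hh I ^ 2 - pp (QL (j + 1)) / hh I else 0)
        = -ε / hh I ^ 2 - pp (QL i) / hh I := by
      rw [Finset.sum_eq_single (i - 1)]
      · rw [if_pos (sub_add_cancel i 1).symm, sub_add_cancel]
      · intro b _ hb
        rw [if_neg]
        intro h
        exact hb (by rw [h, add_sub_cancel_right])
      · simp
    rw [hsplit, e1, e2, e3]
    ring
  have hrow : ∀ i : ZMod I, 0 < ∑ j, M.transpose i j := by
    intro i
    have : (∑ j, M.transpose i j) = μ + ∑ j, FPmat I ε QL QR j i := by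
      simp only [hM, Matrix.transpose_apply, Matrix.add_apply]
      rw [Finset.sum_add_distrib]
      congr 1
      simp [Matrix.smul_apply, Matrix.one_apply, Finset.sum_ite_eq']
    rw [this, hFPsum i, add_zero]
    exact hμ
  obtain ⟨hu, hinv⟩ := Mmat M.transpose hoff hrow
  constructor
  · rw [Matrix.isUnit_iff_isUnit_det, ← Matrix.det_transpose]
    exact (Matrix.isUnit_iff_isUnit_det _).mp hu
  · intro i j
    have : M⁻¹ i j = M.transpose⁻¹ j i := by
      rw [← Matrix.transpose_nonsing_inv, Matrix.transpose_apply]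
    rw [← hM] at *
    rw [this]
    exact hinv j i
end

section
/- Let Q = (Q_L, Q_R) be a discrete policy and μ > 0. If W ∈ ℝ^I satisfies W_i ≥ 0 for all i and h·∑_i W_i = 1, then the unique W' ∈ ℝ^I solving (μI + A(Q)) W' = μ W satisfies W'_i ≥ 0 for all i and h·∑_i W'_i = 1. -/
open Matrix Filter Topology

noncomputable section

lemma hh_pos (I : ℕ) [NeZero I] : 0 < hh I := by
  have : (0:ℝ) < I := by exact_mod_cast Nat.pos_of_ne_zero (NeZero.ne I)
  simpa [hh] using inv_pos.mpr this

lemma FP_colsum (I : ℕ) [NeZero I] (ε : ℝ) (QL QR : ZMod I → ℝ) (j : ZMod I) :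
    ∑ i, FPmat I ε QL QR i j = 0 := by
  simp only [FPmat]
  rw [Finset.sum_add_distrib, Finset.sum_add_distrib]
  have h1 : ∑ i, (if j = i then 2*ε/hh I ^ 2 + pp (QL i)/hh I - np (QR i)/hh I else 0)
      = 2*ε/hh I ^ 2 + pp (QL j)/hh I - np (QR j)/hh I := by
    rw [Finset.sum_ite_eq]; simp
  have h2 : ∑ i, (if j = i - 1 then -ε/hh I ^ 2 + np (QR (i-1))/hh I else 0)
      = -ε/hh I ^ 2 + np (QR j)/hh I := by
    rw [Finset.sum_eq_single (j+1)]
    · simp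
    · intro i _ hne
      rw [if_neg]
      intro he; apply hne; rw [he]; ring
    · simp
  have h3 : ∑ i, (if j = i + 1 then -ε/hh I ^ 2 - pp (QL (i+1))/hh I else 0)
      = -ε/hh I ^ 2 - pp (QL j)/hh I := by
    rw [Finset.sum_eq_single (j-1)]
    · simp
    · intro i _ hne
      rw [if_neg]
      intro he; apply hne; rw [he]; ring
    · simp
  rw [h1, h2, h3]; ring

lemma FP_offdiag (I : ℕ) [NeZero I] (ε : ℝ) (hε : 0 < ε) (QL QR : ZMod I → ℝ)
    {i j : ZMod I} (h : i ≠ j) : FPmat I ε QL QR i j ≤ 0 := by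
  have h0 := hh_pos I
  have e1 : -ε/hh I ^ 2 + np (QR (i-1))/hh I ≤ 0 :=
    add_nonpos (div_nonpos_of_nonpos_of_nonneg (by linarith) (by positivity))
      (div_nonpos_of_nonpos_of_nonneg (min_le_right _ _) h0.le)
  have e2 : -ε/hh I ^ 2 - pp (QL (i+1))/hh I ≤ 0 := by
    have : 0 ≤ pp (QL (i+1))/hh I := div_nonneg (le_max_right _ _) h0.le
    have : -ε/hh I ^ 2 ≤ 0 := div_nonpos_of_nonpos_of_nonneg (by linarith) (by positivity)
    linarith
  simp only [FPmat, if_neg (Ne.symm h), zero_add]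
  split_ifs <;> linarith

lemma key_nonneg_s10 {n : Type*} [Fintype n] [DecidableEq n] {M : Matrix n n ℝ} {μ : ℝ}
    (hμ : 0 < μ) (hoff : ∀ i j, i ≠ j → M i j ≤ 0) (hcol : ∀ j, ∑ i, M i j = μ)
    {V b : n → ℝ} (hMV : M.mulVec V = b) (hb : ∀ i, 0 ≤ b i) : ∀ i, 0 ≤ V i := by
  by_contra hcon
  push_neg at hcon
  obtain ⟨i0, hi0⟩ := hcon
  set S := Finset.univ.filter (fun i => V i < 0) with hS
  have hSne : S.Nonempty := ⟨i0, by simp [hS, hi0]⟩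
  have hT : 0 ≤ ∑ i ∈ S, b i := Finset.sum_nonneg fun i _ => hb i
  have hswap : ∑ i ∈ S, b i = ∑ j, (∑ i ∈ S, M i j) * V j := by
    rw [← hMV]
    simp only [Matrix.mulVec, dotProduct]
    rw [Finset.sum_comm]
    simp [Finset.sum_mul]
  have hsplit : ∑ j, (∑ i ∈ S, M i j) * V j
      = ∑ j ∈ S, (∑ i ∈ S, M i j) * V j + ∑ j ∈ Sᶜ, (∑ i ∈ S, M i j) * V j :=
    (Finset.sum_add_sum_compl S _).symm
  have hA : ∑ j ∈ S, (∑ i ∈ S, M i j) * V j < 0 := by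
    have hle : ∀ j ∈ S, (∑ i ∈ S, M i j) * V j ≤ μ * V j := by
      intro j hj
      have hVj : V j < 0 := by simpa [hS] using hj
      have h1 : ∑ i ∈ S, M i j + ∑ i ∈ Sᶜ, M i j = μ := by
        rw [Finset.sum_add_sum_compl]; exact hcol j
      have h2 : ∑ i ∈ Sᶜ, M i j ≤ 0 := Finset.sum_nonpos fun i hi =>
        hoff i j (fun e => (Finset.mem_compl.mp hi) (e ▸ hj))
      have hcj : μ ≤ ∑ i ∈ S, M i j := by linarith
      exact mul_le_mul_of_nonpos_right hcj hVj.le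
    calc ∑ j ∈ S, (∑ i ∈ S, M i j) * V j ≤ ∑ j ∈ S, μ * V j :=
            Finset.sum_le_sum hle
      _ < 0 := by
            apply Finset.sum_neg (fun j hj => ?_) hSne
            have hVj : V j < 0 := by simpa [hS] using hj
            exact mul_neg_of_pos_of_neg hμ hVj
  have hB : ∑ j ∈ Sᶜ, (∑ i ∈ S, M i j) * V j ≤ 0 := by
    apply Finset.sum_nonpos
    intro j hj
    have hVj : 0 ≤ V j := by
      have := Finset.mem_compl.mp hj
      simp [hS] at this
      linarith
    have hcj : ∑ i ∈ S, M i j ≤ 0 := Finset.sum_nonpos fun i hi =>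
      hoff i j (fun e => (Finset.mem_compl.mp hj) (e ▸ hi))
    exact mul_nonpos_of_nonpos_of_nonneg hcj hVj
  rw [hswap, hsplit] at hT
  linarith


/-- if `W ≥ 0` with `h·∑_i W_i = 1`, then the unique `W'` solving
`(μI + A(Q))W' = μW` satisfies `W' ≥ 0` and `h·∑_i W'_i = 1`. -/
theorem statement_10 (I : ℕ) [NeZero I] (hI : 3 ≤ I) (ε : ℝ) (hε : 0 < ε)
    (QL QR : ZMod I → ℝ) (μ : ℝ) (hμ : 0 < μ)
    (W : ZMod I → ℝ) (hW : ∀ i, 0 ≤ W i) (hWsum : hh I * ∑ i, W i = 1) :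
    (∃! W' : ZMod I → ℝ,
      (μ • (1 : Matrix (ZMod I) (ZMod I) ℝ) + FPmat I ε QL QR).mulVec W' = μ • W) ∧
    (∀ W' : ZMod I → ℝ,
      (μ • (1 : Matrix (ZMod I) (ZMod I) ℝ) + FPmat I ε QL QR).mulVec W' = μ • W →
      (∀ i, 0 ≤ W' i) ∧ hh I * ∑ i, W' i = 1) := by
  set M : Matrix (ZMod I) (ZMod I) ℝ := μ • 1 + FPmat I ε QL QR with hM
  have hcol : ∀ j, ∑ i, M i j = μ := by
    intro j
    simp only [hM, Matrix.add_apply, Matrix.smul_apply, Matrix.one_apply, smul_eq_mul]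
    rw [Finset.sum_add_distrib, FP_colsum]
    simp
  have hoff : ∀ i j, i ≠ j → M i j ≤ 0 := by
    intro i j h
    simp only [hM, Matrix.add_apply, Matrix.smul_apply, Matrix.one_apply, if_neg h,
      smul_zero, zero_add]
    exact FP_offdiag I ε hε QL QR h
  have hb : ∀ i, 0 ≤ (μ • W) i := fun i => by
    simpa using mul_nonneg hμ.le (hW i)
  have hinj : Function.Injective M.mulVec := by
    have hker : ∀ V, M.mulVec V = 0 → V = 0 := by
      intro V hV
      have h1 := key_nonneg_s10 hμ hoff hcol hV (fun i => le_refl (0:ℝ))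
      have h2 := key_nonneg_s10 hμ hoff hcol
        (show M.mulVec (-V) = 0 by rw [Matrix.mulVec_neg, hV, neg_zero])
        (fun i => le_refl (0:ℝ))
      funext i
      have := h2 i
      simp only [Pi.neg_apply, Pi.zero_apply] at this ⊢
      linarith [h1 i]
    intro x y hxy
    have h0 : M.mulVec (x - y) = 0 := by rw [Matrix.mulVec_sub, hxy, sub_self]
    exact sub_eq_zero.mp (hker _ h0)
  have hinjL : Function.Injective M.mulVecLin := by
    intro x y h
    exact hinj (by simpa [Matrix.mulVecLin_apply] using h)
  have hsurj : Function.Surjective M.mulVec := by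
    have := LinearMap.injective_iff_surjective.mp hinjL
    intro b
    obtain ⟨v, hv⟩ := this b
    exact ⟨v, by simpa [Matrix.mulVecLin_apply] using hv⟩
  have hmass : ∀ V : ZMod I → ℝ, ∑ i, M.mulVec V i = μ * ∑ j, V j := by
    intro V
    simp only [Matrix.mulVec, dotProduct]
    rw [Finset.sum_comm]
    rw [Finset.mul_sum]
    apply Finset.sum_congr rfl
    intro j _
    rw [← Finset.sum_mul, hcol]
  obtain ⟨W', hW'⟩ := hsurj (μ • W)
  refine ⟨⟨W', hW', fun y hy => hinj (hy.trans hW'.symm)⟩, ?_⟩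
  intro W'' hsol
  refine ⟨key_nonneg_s10 hμ hoff hcol hsol hb, ?_⟩
  have h1 : μ * ∑ j, W'' j = μ * ∑ j, W j := by
    rw [← hmass W'', hsol]
    simp [Finset.mul_sum]
  have h2 : ∑ j, W'' j = ∑ j, W j := mul_left_cancel₀ hμ.ne' h1
  rw [h2]; exact hWsum
end
end

section
/- Let R > 0 and K > 0. There exist constants C₁, C₂ > 0, depending only on ε, I, R and K, such that for every discrete policy Q = (Q_L, Q_R) with (Q_{L,i})² + (Q_{R,i})² ≤ R² for all i and every f ∈ ℝ^I with max_i |f_i| ≤ K, the unique pair (U, Λ) ∈ ℝ^I × ℝ satisfying −ε(Δ♯U)_i + Q_{L,i}⁺ (D_L U)_i + Q_{R,i}⁻ (D_R U)_i + Λ = f_i for all i and h·∑_i U_i = 0, obeys the bounds |Λ| ≤ C₁ and max_i max(|(D_L U)_i|, |(D_R U)_i|) ≤ C₂. -/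
open Matrix Filter Topology

noncomputable def Tseq (β γ : ℝ) : ℕ → ℝ
  | 0 => 0
  | n+1 => β * Tseq β γ n + γ

lemma Tseq_nonneg (β γ : ℝ) (hβ : 0 ≤ β) (hγ : 0 ≤ γ) : ∀ n, 0 ≤ Tseq β γ n
  | 0 => le_refl 0
  | n+1 => by
      have := Tseq_nonneg β γ hβ hγ n
      simp only [Tseq]
      nlinarith

lemma Tseq_mono (β γ : ℝ) (hβ : 1 ≤ β) (hγ : 0 ≤ γ) : Monotone (Tseq β γ) := by
  apply monotone_nat_of_le_succ
  intro n
  induction n with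
  | zero => simpa [Tseq] using hγ
  | succ n ih =>
    have h0 : (0:ℝ) ≤ β := le_trans zero_le_one hβ
    calc Tseq β γ (n+1) = β * Tseq β γ n + γ := rfl
      _ ≤ β * Tseq β γ (n+1) + γ := by nlinarith
      _ = Tseq β γ (n+2) := rfl

lemma step_arith (e R K a b c va vb : ℝ) (he : 0 < e) (hR : 0 ≤ R) (hK : 0 ≤ K)
    (ha1 : e ≤ a) (ha2 : a ≤ e + R) (hb : e ≤ b) (hc : |c| ≤ 2*K)
    (heq : b * vb = a * va + c) :
    vb ≤ (e + R)/e * max va 0 + 2*K/e := by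
  have hm : 0 ≤ max va 0 := le_max_right _ _
  have hc2 := (abs_le.mp hc).2
  have h1 : a * va ≤ (e+R) * max va 0 := by
    have ha0 : (0:ℝ) ≤ a := by linarith
    have := mul_le_mul_of_nonneg_left (le_max_left va 0) ha0
    have := mul_le_mul_of_nonneg_right ha2 hm
    linarith
  have hX : b * vb ≤ (e+R) * max va 0 + 2*K := by linarith
  have hvb : vb * e ≤ (e+R) * max va 0 + 2*K := by
    rcases le_or_gt vb 0 with h | h
    · nlinarith
    · nlinarith [mul_le_mul_of_nonneg_right hb h.le]
  calc vb ≤ ((e+R) * max va 0 + 2*K)/e := (le_div_iff₀ he).mpr hvb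
    _ = (e+R)/e * max va 0 + 2*K/e := by ring

lemma prop_bound {I : ℕ} [NeZero I] (β γ : ℝ) (hβ : 0 ≤ β) (hγ : 0 ≤ γ)
    (V : ZMod I → ℝ) (i₀ : ZMod I) (h0 : V i₀ ≤ 0)
    (hstep : ∀ i, V (i + 1) ≤ β * max (V i) 0 + γ) :
    ∀ n : ℕ, V (i₀ + (n : ZMod I)) ≤ Tseq β γ n := by
  intro n
  induction n with
  | zero => simpa [Tseq] using h0
  | succ n ih =>
    have hT := Tseq_nonneg β γ hβ hγ n
    have hcast : ((n+1 : ℕ) : ZMod I) = (n : ZMod I) + 1 := by push_cast; ring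
    rw [hcast, ← add_assoc]
    calc V (i₀ + (n:ZMod I) + 1) ≤ β * max (V (i₀ + (n:ZMod I))) 0 + γ := hstep _
      _ ≤ β * Tseq β γ n + γ := by nlinarith [max_le ih hT, le_max_right (V (i₀ + (n:ZMod I))) (0:ℝ)]
      _ = Tseq β γ (n+1) := rfl

lemma mnn {a b : ℝ} (ha : a ≤ 0) (hb : b ≤ 0) : 0 ≤ a * b := by nlinarith

lemma cover {I : ℕ} [NeZero I] (j i : ZMod I) : ∃ n : ℕ, n ≤ I ∧ i = j + (n : ZMod I) := by
  refine ⟨(i - j).val, (ZMod.val_lt _).le, ?_⟩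
  simp [ZMod.natCast_val, ZMod.cast_id]

/-- uniform bounds for the discrete ergodic HJ problem: there are constants
`C₁, C₂ > 0` (depending only on `ε, I, R, K`) such that for every policy `Q` with
`|Q_i| ≤ R` and every `f` with `max_i |f_i| ≤ K`, the unique solution `(U,Λ)` of
`−ε(Δ♯U)_i + Q_{L,i}⁺(D_L U)_i + Q_{R,i}⁻(D_R U)_i + Λ = f_i`, `h·∑_i U_i = 0`,
satisfies `|Λ| ≤ C₁` and `max_i max(|(D_L U)_i|, |(D_R U)_i|) ≤ C₂`. -/
theorem statement_14 (I : ℕ) [NeZero I] (hI : 3 ≤ I) (ε : ℝ) (hε : 0 < ε)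
    (R K : ℝ) (hR : 0 < R) (hK : 0 < K) :
    ∃ C₁ > (0 : ℝ), ∃ C₂ > (0 : ℝ),
      ∀ QL QR : ZMod I → ℝ, (∀ i, QL i ^ 2 + QR i ^ 2 ≤ R ^ 2) →
      ∀ f : ZMod I → ℝ, (∀ i, |f i| ≤ K) →
      ∀ (U : ZMod I → ℝ) (Λ : ℝ),
        (∀ i, -ε * lapD I U i + pp (QL i) * DLd I U i + np (QR i) * DRd I U i + Λ = f i) →
        hh I * ∑ i, U i = 0 →
        |Λ| ≤ C₁ ∧ ∀ i, max |DLd I U i| |DRd I U i| ≤ C₂ := by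
  have hIpos : (0:ℝ) < I := by exact_mod_cast Nat.lt_of_lt_of_le (by norm_num) hI
  have hhpos : 0 < hh I := by rw [hh]; positivity
  have hhne : hh I ≠ 0 := ne_of_gt hhpos
  set e := ε / hh I with he_def
  have hepos : 0 < e := div_pos hε hhpos
  set β := (e + R)/e with hβ_def
  set γ := 2*K/e with hγ_def
  have hβ1 : 1 ≤ β := by rw [hβ_def, le_div_iff₀ hepos]; linarith
  have hβ0 : 0 ≤ β := le_trans zero_le_one hβ1
  have hγ0 : 0 < γ := by rw [hγ_def]; positivity
  have hT1 : Tseq β γ 1 = γ := by simp [Tseq]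
  have hTpos : 0 < Tseq β γ I := by
    have := Tseq_mono β γ hβ1 hγ0.le (show 1 ≤ I by omega)
    rw [hT1] at this; linarith
  refine ⟨K, hK, Tseq β γ I, hTpos, ?_⟩
  intro QL QR hQ f hf U Λ heq _hmean
  -- bounds on the policy
  have hppR : ∀ i, pp (QL i) ≤ R := by
    intro i
    rcases le_or_gt (QL i) 0 with h | h
    · rw [pp, max_eq_right h]; exact hR.le
    · have : QL i ≤ R := by nlinarith [hQ i, sq_nonneg (QR i)]
      rw [pp]; exact max_le this hR.le
  have hnpR : ∀ i, -R ≤ np (QR i) := by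
    intro i
    rcases le_or_gt 0 (QR i) with h | h
    · rw [np, min_eq_right h]; linarith
    · have : -R ≤ QR i := by nlinarith [hQ i, sq_nonneg (QL i)]
      rw [np]; exact le_min this (by linarith)
  have hpp0 : ∀ a, 0 ≤ pp a := fun a => le_max_right _ _
  have hnp0 : ∀ a, np a ≤ 0 := fun a => min_le_right _ _
  -- Λ bound via max/min principle
  obtain ⟨imax, hmax⟩ := Finite.exists_max U
  obtain ⟨imin, hmin⟩ := Finite.exists_min U
  have hΛle : Λ ≤ K := by
    have h1 := heq imax
    have hlap : lapD I U imax ≤ 0 := by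
      unfold lapD
      apply div_nonpos_of_nonpos_of_nonneg
      · linarith [hmax (imax - 1), hmax (imax + 1)]
      · positivity
    have hDL : 0 ≤ DLd I U imax := div_nonneg (by linarith [hmax (imax-1)]) hhpos.le
    have hDR : DRd I U imax ≤ 0 :=
      div_nonpos_of_nonpos_of_nonneg (by linarith [hmax (imax+1)]) hhpos.le
    have t1 : 0 ≤ -ε * lapD I U imax := mnn (by linarith) hlap
    have t2 : 0 ≤ pp (QL imax) * DLd I U imax := mul_nonneg (hpp0 _) hDL
    have t3 : 0 ≤ np (QR imax) * DRd I U imax := mnn (hnp0 _) hDR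
    have := (abs_le.mp (hf imax)).2
    linarith
  have hΛge : -K ≤ Λ := by
    have h1 := heq imin
    have hlap : 0 ≤ lapD I U imin := by
      unfold lapD
      apply div_nonneg
      · linarith [hmin (imin - 1), hmin (imin + 1)]
      · positivity
    have hDL : DLd I U imin ≤ 0 :=
      div_nonpos_of_nonpos_of_nonneg (by linarith [hmin (imin-1)]) hhpos.le
    have hDR : 0 ≤ DRd I U imin := div_nonneg (by linarith [hmin (imin+1)]) hhpos.le
    have t1 : -ε * lapD I U imin ≤ 0 := mul_nonpos_of_nonpos_of_nonneg (by linarith) hlap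
    have t2 : pp (QL imin) * DLd I U imin ≤ 0 := mul_nonpos_of_nonneg_of_nonpos (hpp0 _) hDL
    have t3 : np (QR imin) * DRd I U imin ≤ 0 := mul_nonpos_of_nonpos_of_nonneg (hnp0 _) hDR
    have := (abs_le.mp (hf imin)).1
    linarith
  have habsΛ : |Λ| ≤ K := abs_le.mpr ⟨hΛge, hΛle⟩
  refine ⟨habsΛ, ?_⟩
  -- gradient bound
  set V := DLd I U with hV_def
  have hVR : ∀ i : ZMod I, DRd I U i = V (i+1) := by
    intro i
    rw [hV_def]
    unfold DRd DLd
    rw [add_sub_cancel_right]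
  have hlapV : ∀ i : ZMod I, lapD I U i = (V (i+1) - V i) / hh I := by
    intro i
    rw [hV_def]
    unfold lapD DLd
    rw [add_sub_cancel_right]
    field_simp
    ring
  have hrec : ∀ i : ZMod I, (e - np (QR i)) * V (i+1) = (e + pp (QL i)) * V i + (Λ - f i) := by
    intro i
    have h1 := heq i
    rw [hlapV i, hVR i] at h1
    rw [he_def]
    linear_combination -h1
  have hc2K : ∀ i, |Λ - f i| ≤ 2*K := by
    intro i
    have h1 := abs_le.mp habsΛ
    have h2 := abs_le.mp (hf i)
    exact abs_le.mpr ⟨by linarith, by linarith⟩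
  have hstepV : ∀ i : ZMod I, V (i + 1) ≤ β * max (V i) 0 + γ := by
    intro i
    rw [hβ_def, hγ_def]
    exact step_arith e R K (e + pp (QL i)) (e - np (QR i)) (Λ - f i) (V i) (V (i+1))
      hepos hR.le hK.le (by linarith [hpp0 (QL i)]) (by linarith [hppR i])
      (by linarith [hnp0 (QR i)]) (hc2K i) (hrec i)
  have hstepW : ∀ i : ZMod I, -V (i + 1) ≤ β * max (-V i) 0 + γ := by
    intro i
    rw [hβ_def, hγ_def]
    refine step_arith e R K (e + pp (QL i)) (e - np (QR i)) (f i - Λ) (-V i) (-V (i+1))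
      hepos hR.le hK.le (by linarith [hpp0 (QL i)]) (by linarith [hppR i])
      (by linarith [hnp0 (QR i)]) ?_ (by linarith [hrec i])
    · have := hc2K i
      rw [abs_sub_comm] at this
      exact this
  -- starting points: at argmax of U, DL ≥ 0 and DR ≤ 0
  have hV0 : V (imax + 1) ≤ 0 := by
    rw [← hVR imax]
    exact div_nonpos_of_nonpos_of_nonneg (by linarith [hmax (imax+1)]) hhpos.le
  have hW0 : -V imax ≤ 0 := by
    simp only [neg_nonpos, hV_def]
    exact div_nonneg (by linarith [hmax (imax-1)]) hhpos.le
  have hup := prop_bound β γ hβ0 hγ0.le V (imax + 1) hV0 hstepV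
  have hdn := prop_bound β γ hβ0 hγ0.le (fun i => -V i) imax hW0 hstepW
  have hdn' : ∀ n : ℕ, -V (imax + (n:ZMod I)) ≤ Tseq β γ n := fun n => hdn n
  have hbound : ∀ i : ZMod I, |V i| ≤ Tseq β γ I := by
    intro i
    rw [abs_le]
    constructor
    · obtain ⟨n, hn, hni⟩ := cover imax i
      have h1 := hdn' n
      have hm := Tseq_mono β γ hβ1 hγ0.le hn
      rw [← hni] at h1
      linarith
    · obtain ⟨n, hn, hni⟩ := cover (imax + 1) i
      have h1 := hup n
      have hm := Tseq_mono β γ hβ1 hγ0.le hn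
      rw [← hni] at h1
      linarith
  intro i
  rw [hVR i]
  exact max_le (hbound i) (hbound (i+1))
end
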